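/- Let (X,T,μ) be a system with exponential decay of correlations for functions of bounded variation against L¹, with constants C, τ > 0, and set C₁ = 6C/(1 − e^{−τ}). Then for every interval B ⊆ X and every m ≥ 1, the Birkhoff-type sum Z_m = Σ_{k=0}^{m−1} 1_B ∘ T^k satisfies ∫ Z_m² dμ − (∫ Z_m dμ)² ≤ C₁ m μ(B); consequently, if μ(B) > 0, then ∫ (Z_m/(m μ(B)) − 1)² dμ ≤ C₁/(m μ(B)). -/

import Mathlib

/-!
Write `Z_m = ∑_{k<m} φ ∘ T^k` with `φ = 1_B`. The variance of `Z_m` is the double sum of the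
covariances `cov(φ ∘ T^j, φ ∘ T^k)`, which by invariance equal `cov(φ ∘ T^|j-k|, φ)`. Decay of
correlations bounds these by `C e^{-τ|j-k|} μ(B) ‖1_B‖_BV ≤ 3 C μ(B) e^{-τ|j-k|}`, because the
indicator of an interval has variation at most `2`. Summing the geometric series over `k` gives at
most `2 / (1 - e^{-τ})` for each of the `m` values of `j`. The normalized estimate is the same
variance divided by `(m μ(B))² = (∫ Z_m)²`.
-/

open MeasureTheory ProbabilityTheory

open Finset in
theorem sum_range_pow_dist_le {r : ℝ} (h0 : 0 ≤ r) (h1 : r < 1) (m j : ℕ) :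
    ∑ k ∈ range m, r ^ Nat.dist j k ≤ 2 / (1 - r) := by
  have geom (n : ℕ) : ∑ i ∈ range n, r ^ i ≤ 1 / (1 - r) := by
    simpa using geom_sum_Ico_le_of_lt_one (m := 0) (n := n) h0 h1
  calc ∑ k ∈ range m, r ^ Nat.dist j k
      ≤ ∑ k ∈ range (j + 1 + m), r ^ Nat.dist j k :=
        sum_le_sum_of_subset_of_nonneg (range_mono (by omega)) fun _ _ _ => by positivity
    _ = ∑ k ∈ range (j + 1), r ^ k + ∑ i ∈ range m, r ^ (i + 1) := by
        rw [sum_range_add, ← sum_range_reflect]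
        congr 1 <;> refine sum_congr rfl fun i hi => ?_ <;> rw [mem_range] at hi <;>
          congr 1 <;> simp only [Nat.dist] <;> omega
    _ ≤ 1 / (1 - r) + 1 / (1 - r) := by
        gcongr
        · exact geom _
        · exact (sum_le_sum fun i _ => pow_le_pow_of_le_one h0 h1.le i.le_succ).trans (geom m)
    _ = 2 / (1 - r) := by ring

theorem Set.indicator_one_mem_Icc {ι : Type*} (U : Set ι) (x : ι) :
    U.indicator (1 : ι → ℝ) x ∈ Set.Icc 0 1 := by
  by_cases hx : x ∈ U <;> simp [hx]

section Variation

variable {α : Type*} [LinearOrder α]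

theorem Monotone.eVariationOn_le_of_mem_Icc {f : α → ℝ} (hf : Monotone f) {a b : ℝ}
    (hab : ∀ x, f x ∈ Set.Icc a b) (s : Set α) : eVariationOn f s ≤ ENNReal.ofReal (b - a) := by
  rw [eVariationOn.eq_biSup_inter_Icc]
  refine iSup₂_le fun p hp => ((hf.monotoneOn s).eVariationOn_eq hp.1 hp.2.1).trans_le ?_
  exact ENNReal.ofReal_le_ofReal (by linarith [(hab p.2).2, (hab p.1).1])

theorem Antitone.eVariationOn_le_of_mem_Icc {f : α → ℝ} (hf : Antitone f) {a b : ℝ}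
    (hab : ∀ x, f x ∈ Set.Icc a b) (s : Set α) : eVariationOn f s ≤ ENNReal.ofReal (b - a) := by
  rw [← eVariationOn.comp_ofDual]
  exact hf.dual_left.eVariationOn_le_of_mem_Icc (fun x => hab _) _

theorem IsUpperSet.monotone_indicator_one {U : Set α} (hU : IsUpperSet U) :
    Monotone (U.indicator (1 : α → ℝ)) := by
  intro x y hxy
  by_cases hx : x ∈ U
  · rw [Set.indicator_of_mem hx, Set.indicator_of_mem (hU hxy hx)]
    exact le_rfl
  · rw [Set.indicator_of_notMem hx]
    exact (U.indicator_one_mem_Icc y).1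

theorem IsLowerSet.antitone_indicator_one {L : Set α} (hL : IsLowerSet L) :
    Antitone (L.indicator (1 : α → ℝ)) :=
  hL.toDual.monotone_indicator_one.dual_left

-- `1_B = 1_{↑B} * 1_{↓B}`: a product of a monotone and an antitone `{0,1}`-valued function.
theorem Set.OrdConnected.eVariationOn_indicator_one_le_two {B : Set α} (hB : B.OrdConnected)
    (s : Set α) : eVariationOn (B.indicator (1 : α → ℝ)) s ≤ 2 := by
  have hnorm (A : Set α) (x : α) : ‖A.indicator (1 : α → ℝ) x‖ₑ ≤ 1 := by
    by_cases hx : x ∈ A <;> simp [hx]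
  rw [← hB.upperClosure_inter_lowerClosure, Set.inter_indicator_one]
  calc _ ≤ 1 * eVariationOn ((lowerClosure B : Set α).indicator 1) s +
        1 * eVariationOn ((upperClosure B : Set α).indicator 1) s :=
        eVariation_mul_le (fun x _ => hnorm _ x) (fun x _ => hnorm _ x)
    _ ≤ 1 * ENNReal.ofReal (1 - 0) + 1 * ENNReal.ofReal (1 - 0) := by
        gcongr
        · exact (lowerClosure B).lower.antitone_indicator_one.eVariationOn_le_of_mem_Icc
            (Set.indicator_one_mem_Icc _) s
        · exact (upperClosure B).upper.monotone_indicator_one.eVariationOn_le_of_mem_Icc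
            (Set.indicator_one_mem_Icc _) s
    _ = 2 := by norm_num

end Variation

theorem birkhoffSum_eq_sum_comp {α M : Type*} [AddCommMonoid M] (f : α → α) (g : α → M)
    (n : ℕ) : birkhoffSum f g n = ∑ k ∈ Finset.range n, g ∘ f^[k] := by
  ext x
  simp [birkhoffSum]

theorem MeasureTheory.MeasurePreserving.integral_comp_of_aestronglyMeasurable
    {α β : Type*} [MeasurableSpace α] [MeasurableSpace β] {μ : Measure α} {ν : Measure β}
    {f : α → β} (hf : MeasurePreserving f μ ν) {g : β → ℝ} (hg : AEStronglyMeasurable g ν) :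
    ∫ x, g (f x) ∂μ = ∫ y, g y ∂ν := by
  rw [← hf.map_eq] at hg ⊢
  exact (integral_map hf.aemeasurable hg).symm

namespace MeasureTheory.MeasurePreserving

variable {Ω : Type*} [MeasurableSpace Ω] {μ : Measure Ω} {T : Ω → Ω}

theorem integral_birkhoffSum (hT : MeasurePreserving T μ μ) {φ : Ω → ℝ} (hφ : Integrable φ μ)
    (n : ℕ) : ∫ x, birkhoffSum T φ n x ∂μ = n * ∫ x, φ x ∂μ := by
  have hint (k : ℕ) : Integrable (fun x => φ (T^[k] x)) μ :=
    (hT.iterate k).integrable_comp_of_integrable hφ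
  simp only [birkhoffSum]
  rw [integral_finsetSum _ fun k _ => hint k]
  simp [(hT.iterate _).integral_comp_of_aestronglyMeasurable hφ.aestronglyMeasurable]

theorem memLp_birkhoffSum (hT : MeasurePreserving T μ μ) {p : ENNReal} {φ : Ω → ℝ}
    (hφ : MemLp φ p μ) (n : ℕ) : MemLp (birkhoffSum T φ n) p μ := by
  rw [birkhoffSum_eq_sum_comp]
  exact memLp_finsetSum' _ fun k _ => hφ.comp_measurePreserving (hT.iterate k)

theorem covariance_comp_iterate_add (hT : MeasurePreserving T μ μ) {φ ψ : Ω → ℝ}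
    (hφ : AEStronglyMeasurable φ μ) (hψ : AEStronglyMeasurable ψ μ) (n j : ℕ) :
    cov[φ ∘ T^[n + j], ψ ∘ T^[j]; μ] = cov[φ ∘ T^[n], ψ; μ] := by
  have hTj := hT.iterate j
  rw [Function.iterate_add, ← Function.comp_assoc, ← covariance_map _ _ hTj.aemeasurable,
    hTj.map_eq]
  · rw [hTj.map_eq]; exact hφ.comp_measurePreserving (hT.iterate n)
  · rwa [hTj.map_eq]

theorem covariance_comp_iterate_le_pow_dist (hT : MeasurePreserving T μ μ) {φ : Ω → ℝ}
    (hφ : AEStronglyMeasurable φ μ) {K r : ℝ} (hcov : ∀ n, cov[φ ∘ T^[n], φ; μ] ≤ K * r ^ n)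
    (j k : ℕ) : cov[φ ∘ T^[j], φ ∘ T^[k]; μ] ≤ K * r ^ Nat.dist j k := by
  wlog hjk : j ≤ k generalizing j k
  · rw [covariance_comm, Nat.dist_comm]
    exact this k j (by omega)
  obtain ⟨n, rfl⟩ := Nat.exists_eq_add_of_le hjk
  rw [covariance_comm, add_comm, hT.covariance_comp_iterate_add hφ hφ]
  simpa [Nat.dist] using hcov n

theorem variance_birkhoffSum_le [IsFiniteMeasure μ] (hT : MeasurePreserving T μ μ) {φ : Ω → ℝ}
    (hφ : MemLp φ 2 μ) {K r : ℝ} (hK : 0 ≤ K) (h0 : 0 ≤ r) (h1 : r < 1)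
    (hcov : ∀ n, cov[φ ∘ T^[n], φ; μ] ≤ K * r ^ n) (m : ℕ) :
    Var[birkhoffSum T φ m; μ] ≤ 2 * K * m / (1 - r) := by
  rw [birkhoffSum_eq_sum_comp, variance_sum' fun k _ => hφ.comp_measurePreserving (hT.iterate k)]
  calc ∑ j ∈ Finset.range m, ∑ k ∈ Finset.range m, cov[φ ∘ T^[j], φ ∘ T^[k]; μ]
      ≤ ∑ j ∈ Finset.range m, ∑ k ∈ Finset.range m, K * r ^ Nat.dist j k := by
        gcongr with j _ k _
        exact hT.covariance_comp_iterate_le_pow_dist hφ.aestronglyMeasurable hcov j k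
    _ ≤ ∑ j ∈ Finset.range m, K * (2 / (1 - r)) := by
        gcongr with j _
        rw [← Finset.mul_sum]
        exact mul_le_mul_of_nonneg_left (sum_range_pow_dist_le h0 h1 m j) hK
    _ = 2 * K * m / (1 - r) := by simp; ring

end MeasureTheory.MeasurePreserving

theorem integral_div_sub_one_sq {Ω : Type*} [MeasurableSpace Ω] {μ : Measure Ω}
    [IsProbabilityMeasure μ] {X : Ω → ℝ} (hX : AEMeasurable X μ) {a : ℝ} (hXa : μ[X] = a)
    (ha : a ≠ 0) : ∫ x, (X x / a - 1) ^ 2 ∂μ = Var[X; μ] / a ^ 2 := by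
  have hvar : Var[fun x => X x / a; μ] = Var[X; μ] / a ^ 2 := by
    simp_rw [div_eq_mul_inv, variance_mul_const, inv_pow]
  rw [← hvar, variance_eq_integral (hX.div_const a), integral_div, hXa, div_self ha]

section Decay

variable {α : Type*} [LinearOrder α] [MeasurableSpace α]

def HasExpDecayOfCorrelations (μ : Measure α) (T : α → α) (C τ : ℝ) : Prop :=
  ∀ (n : ℕ) (f g : α → ℝ), Integrable f μ → BoundedVariationOn g Set.univ →
    |(∫ x, f (T^[n] x) * g x ∂μ) - (∫ x, f x ∂μ) * ∫ x, g x ∂μ| ≤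
      C * Real.exp (-τ * n) * (∫ x, |f x| ∂μ) *
        ((⨆ x, |g x|) + (eVariationOn g Set.univ).toReal)

variable {μ : Measure α} [IsProbabilityMeasure μ] {T : α → α} {C τ : ℝ}

theorem HasExpDecayOfCorrelations.covariance_le (hdec : HasExpDecayOfCorrelations μ T C τ)
    (hT : MeasurePreserving T μ μ) {f g : α → ℝ} (hf : MemLp f 2 μ) (hg : MemLp g 2 μ)
    (hgBV : BoundedVariationOn g Set.univ) (n : ℕ) :
    cov[f ∘ T^[n], g; μ] ≤ C * Real.exp (-τ * n) * (∫ x, |f x| ∂μ) *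
      ((⨆ x, |g x|) + (eVariationOn g Set.univ).toReal) := by
  rw [covariance_eq_sub (hf.comp_measurePreserving (hT.iterate n)) hg]
  have hmean : ∫ x, f (T^[n] x) ∂μ = ∫ x, f x ∂μ :=
    (hT.iterate n).integral_comp_of_aestronglyMeasurable hf.aestronglyMeasurable
  exact (le_abs_self _).trans (hmean ▸ hdec n f g (hf.integrable one_le_two) hgBV)

theorem HasExpDecayOfCorrelations.covariance_indicator_le
    (hdec : HasExpDecayOfCorrelations μ T C τ) (hT : MeasurePreserving T μ μ) (hC : 0 ≤ C)
    {B : Set α} (hB : B.OrdConnected) (hBm : MeasurableSet B) (n : ℕ) :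
    cov[B.indicator 1 ∘ T^[n], B.indicator 1; μ] ≤ 3 * C * μ.real B * Real.exp (-τ) ^ n := by
  have hφ : MemLp (B.indicator (1 : α → ℝ)) 2 μ := (memLp_const 1).indicator hBm
  have hvar := hB.eVariationOn_indicator_one_le_two Set.univ
  have hφBV : BoundedVariationOn (B.indicator (1 : α → ℝ)) Set.univ :=
    ne_top_of_le_ne_top ENNReal.ofNat_ne_top hvar
  have hL1 : ∫ x, |B.indicator (1 : α → ℝ) x| ∂μ = μ.real B := by
    simp_rw [abs_of_nonneg (B.indicator_one_mem_Icc _).1]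
    exact integral_indicator_one hBm
  have hBV : (⨆ x, |B.indicator (1 : α → ℝ) x|) +
      (eVariationOn (B.indicator (1 : α → ℝ)) Set.univ).toReal ≤ 1 + 2 := by
    gcongr
    · refine Real.iSup_le (fun x => ?_) zero_le_one
      rw [abs_of_nonneg (B.indicator_one_mem_Icc x).1]
      exact (B.indicator_one_mem_Icc x).2
    · simpa using ENNReal.toReal_mono ENNReal.ofNat_ne_top hvar
  calc _ ≤ C * Real.exp (-τ * n) * μ.real B * (1 + 2) := by
        rw [← hL1]
        exact (hdec.covariance_le hT hφ hφ hφBV n).trans (by gcongr)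
    _ = 3 * C * μ.real B * Real.exp (-τ) ^ n := by
        rw [← Real.exp_nat_mul]; ring_nf

end Decay

/-- The basic variance estimate: for an interval `B` and `Z_m = ∑_{k<m} 1_B ∘ T^k`,
`∫ Z_m² dμ - (∫ Z_m dμ)² ≤ C₁ m μ(B)` with `C₁ = 6C/(1 - e^{-τ})`; consequently, if
`μ(B) > 0`, then `∫ (Z_m/(m μ(B)) - 1)² dμ ≤ C₁/(m μ(B))`. -/
theorem stmt6
    (μ : Measure ℝ) [IsProbabilityMeasure μ] (T : ℝ → ℝ)
    (hT : MeasurePreserving T μ μ)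
    (C τ : ℝ) (hC : 0 < C) (hτ : 0 < τ)
    (hdec : ∀ (n : ℕ) (f g : ℝ → ℝ), Integrable f μ → BoundedVariationOn g Set.univ →
      |(∫ x, f (T^[n] x) * g x ∂μ) - (∫ x, f x ∂μ) * ∫ x, g x ∂μ| ≤
        C * Real.exp (-τ * n) * (∫ x, |f x| ∂μ) *
          ((⨆ x, |g x|) + (eVariationOn g Set.univ).toReal))
    (C₁ : ℝ) (hC₁ : C₁ = 6 * C / (1 - Real.exp (-τ)))
    (B : Set ℝ) (hB : B.OrdConnected) (m : ℕ) (hm : 1 ≤ m) :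
    (∫ x, (∑ k ∈ Finset.range m, B.indicator (fun _ => (1 : ℝ)) (T^[k] x)) ^ 2 ∂μ -
        (∫ x, ∑ k ∈ Finset.range m, B.indicator (fun _ => (1 : ℝ)) (T^[k] x) ∂μ) ^ 2 ≤
      C₁ * m * (μ B).toReal) ∧
    (0 < (μ B).toReal →
      ∫ x, ((∑ k ∈ Finset.range m, B.indicator (fun _ => (1 : ℝ)) (T^[k] x)) /
          ((m : ℝ) * (μ B).toReal) - 1) ^ 2 ∂μ ≤
        C₁ / ((m : ℝ) * (μ B).toReal)) := by
  have hφ : MemLp (B.indicator (1 : ℝ → ℝ)) 2 μ := (memLp_const 1).indicator hB.measurableSet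
  have hZ := hT.memLp_birkhoffSum hφ m
  have hmean : μ[birkhoffSum T (B.indicator 1) m] = m * μ.real B := by
    rw [hT.integral_birkhoffSum (hφ.integrable one_le_two), integral_indicator_one hB.measurableSet]
  have hvar : Var[birkhoffSum T (B.indicator 1) m; μ] ≤ C₁ * m * μ.real B := by
    refine (hT.variance_birkhoffSum_le hφ (by positivity) (Real.exp_nonneg _)
      (Real.exp_lt_one_iff.2 (by linarith))
      (HasExpDecayOfCorrelations.covariance_indicator_le hdec hT hC.le hB hB.measurableSet)
      m).trans_eq ?_
    rw [hC₁]
    ring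
  refine ⟨(variance_eq_sub hZ).symm.trans_le hvar, fun hb => ?_⟩
  have hmb : 0 < (m : ℝ) * μ.real B := mul_pos (by exact_mod_cast hm) hb
  calc _ = Var[birkhoffSum T (B.indicator 1) m; μ] / (m * μ.real B) ^ 2 :=
        integral_div_sub_one_sq hZ.aemeasurable hmean hmb.ne'
    _ ≤ C₁ * m * μ.real B / (m * μ.real B) ^ 2 := by gcongr
    _ = C₁ / (m * μ.real B) := by field_simp
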